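/- arXiv:2405.09168 — 2 statements merged into one kernel-verified Lean document; each statement's English description precedes it below -/
import Mathlib

section
/- Let V be a vector space over ℂ and N : V → V a nilpotent linear map (Nᵏ = 0 for some k), so that all power series in N reduce to finite sums. Let K, w ∈ V and define L := exp(−iN)(K) + F(−iN)(w) = Σ_{n} ((−i)ⁿ/n!) Nⁿ(K) + Σ_{n} ((−i)ⁿ/(n+1)!) Nⁿ(w). Then L − K − w = G(N)(L − K) − (i/2) N(L + K), where G(N) := Σ_{n≥1} (−1)^{n+1} (B_{2n}/(2n)!) N^{2n}. (Operator form of Corollary 3.4, the all-orders LV obstruction identity L − K − ∂U = G(O_U)(L − K) − (i/2) O_U(L + K), with the obstruction map O_U replaced by the linear map N.) -/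
/-!
Truncating at the nilpotency index makes evaluation of formal power series at `N` an
algebra homomorphism `ℂ⟦X⟧ → End V`. Writing `E = e^{-iX}` and `Φ = F(-iX)`, one has
`L = E K + Φ w`, so it suffices to prove the power series identities
`G (E - 1) - (i/2) X (E + 1) = E - 1` and `G Φ - (i/2) X Φ = Φ - 1`. Both follow from
`G = 1 - iX/2 - B(iX)`, where `B(u) = u / (e^u - 1)`, together with `B(iX) (e^{iX} - 1) = iX`,
`E e^{iX} = 1` and `-iX Φ = E - 1`.
-/

open scoped Nat

namespace Polynomial

variable {R A : Type*} [CommRing R] [Ring A] [Algebra R A]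

theorem aeval_congr_of_pow_eq_zero {a : A} {k : ℕ} (ha : a ^ k = 0) {P Q : Polynomial R}
    (h : ∀ d < k, P.coeff d = Q.coeff d) : aeval a P = aeval a Q := by
  obtain ⟨q, hq⟩ : X ^ k ∣ P - Q := X_pow_dvd_iff.2 fun d hd => by
    rw [coeff_sub, h d hd, sub_self]
  rw [← sub_eq_zero, ← map_sub, hq, map_mul, map_pow, aeval_X, ha, zero_mul]

end Polynomial

namespace PowerSeries

variable {R A : Type*} [CommRing R] [Ring A] [Algebra R A] {a : A} {k : ℕ}

theorem aeval_trunc_coe_of_pow_eq_zero (ha : a ^ k = 0) (P : Polynomial R) :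
    Polynomial.aeval a (trunc k (P : R⟦X⟧)) = Polynomial.aeval a P :=
  Polynomial.aeval_congr_of_pow_eq_zero ha fun d hd => by
    rw [coeff_trunc, if_pos hd, Polynomial.coeff_coe]

noncomputable def aevalOfPowEqZero (ha : a ^ k = 0) : R⟦X⟧ →ₐ[R] A where
  toFun f := Polynomial.aeval a (trunc k f)
  map_one' := by
    rw [← Polynomial.coe_one, aeval_trunc_coe_of_pow_eq_zero ha, map_one]
  map_mul' f g := by
    rw [← trunc_trunc_mul_trunc, ← Polynomial.coe_mul, aeval_trunc_coe_of_pow_eq_zero ha,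
      map_mul]
  map_zero' := by simp
  map_add' f g := by simp
  commutes' r := by
    rw [algebraMap_apply, Algebra.algebraMap_self, RingHom.id_apply, ← Polynomial.coe_C,
      aeval_trunc_coe_of_pow_eq_zero ha, Polynomial.aeval_C]

theorem aevalOfPowEqZero_apply (ha : a ^ k = 0) {m : ℕ} (hm : k ≤ m) (f : R⟦X⟧) :
    aevalOfPowEqZero ha f = ∑ n ∈ Finset.range m, coeff n f • a ^ n := by
  have htrunc : Polynomial.aeval a (trunc k f) = Polynomial.aeval a (trunc m f) :=
    Polynomial.aeval_congr_of_pow_eq_zero ha fun d hd => by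
      rw [coeff_trunc, coeff_trunc, if_pos hd, if_pos (hd.trans_le hm)]
  change Polynomial.aeval a (trunc k f) = _
  rw [htrunc, Polynomial.aeval_def, eval₂_trunc_eq_sum_range]
  simp only [Algebra.smul_def]

@[simp]
theorem aevalOfPowEqZero_X (ha : a ^ k = 0) : aevalOfPowEqZero ha (X : R⟦X⟧) = a := by
  rw [← Polynomial.coe_X]
  exact (aeval_trunc_coe_of_pow_eq_zero ha _).trans (Polynomial.aeval_X a)

theorem rescale_neg_exp_mul_rescale_exp {B : Type*} [CommRing B] [Algebra ℚ B] (c : B) :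
    rescale (-c) (exp B) * rescale c (exp B) = 1 := by
  rw [exp_mul_exp_eq_exp_add, neg_add_cancel, rescale_zero_apply, constantCoeff_exp, map_one]

end PowerSeries

open PowerSeries Complex

noncomputable def powerSeriesF : ℂ⟦X⟧ := mk fun n => ((n + 1)! : ℂ)⁻¹

/-- `1 - (u/2) cot(u/2) = 1 - iu/2 - iu / (e^{iu} - 1)`, and `u / (e^u - 1)` is the
generating function `bernoulliPowerSeries` (with `B₁ = -1/2`). -/
noncomputable def powerSeriesG : ℂ⟦X⟧ :=
  1 - C (I / 2) * X - rescale I (bernoulliPowerSeries ℂ)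

theorem X_mul_powerSeriesF : X * powerSeriesF = exp ℂ - 1 := by
  ext n
  cases n with
  | zero => simp
  | succ n =>
    rw [coeff_succ_X_mul, powerSeriesF, coeff_mk, map_sub, coeff_exp, coeff_one,
      if_neg n.succ_ne_zero, sub_zero, eq_ratCast]
    push_cast
    rw [one_div]

theorem rescale_I_bernoulliPowerSeries_mul_rescale_exp_sub_one :
    rescale I (bernoulliPowerSeries ℂ) * (rescale (-I) (exp ℂ) - 1)
      = -(C I * X * rescale (-I) (exp ℂ)) := by
  have hB := congrArg (rescale I) (bernoulliPowerSeries_mul_exp_sub_one ℂ)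
  rw [map_mul, map_sub, map_one, rescale_X] at hB
  linear_combination rescale I (bernoulliPowerSeries ℂ) * rescale_neg_exp_mul_rescale_exp I
    - rescale (-I) (exp ℂ) * hB

theorem rescale_I_bernoulliPowerSeries_mul_powerSeriesF :
    rescale I (bernoulliPowerSeries ℂ) * rescale (-I) powerSeriesF = rescale (-I) (exp ℂ) := by
  have hF := congrArg (rescale (-I)) X_mul_powerSeriesF
  rw [map_mul, map_sub, map_one, rescale_X, map_neg] at hF
  have hIX : (C I * X : ℂ⟦X⟧) ≠ 0 := mul_ne_zero (by simp) X_ne_zero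
  refine mul_left_cancel₀ hIX ?_
  linear_combination -rescale I (bernoulliPowerSeries ℂ) * hF
    - rescale_I_bernoulliPowerSeries_mul_rescale_exp_sub_one

theorem C_I_eq_two_mul : (C I : ℂ⟦X⟧) = 2 * C (I / 2) := by
  rw [← map_ofNat C 2, ← map_mul, mul_div_cancel₀ _ two_ne_zero]

theorem powerSeriesG_mul_rescale_exp_sub_one :
    powerSeriesG * (rescale (-I) (exp ℂ) - 1) - (I / 2) • (X * (rescale (-I) (exp ℂ) + 1))
      = rescale (-I) (exp ℂ) - 1 := by
  rw [powerSeriesG, smul_eq_C_mul]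
  linear_combination -rescale_I_bernoulliPowerSeries_mul_rescale_exp_sub_one
    + (X * rescale (-I) (exp ℂ)) * C_I_eq_two_mul

theorem powerSeriesG_mul_rescale_powerSeriesF :
    powerSeriesG * rescale (-I) powerSeriesF - (I / 2) • (X * rescale (-I) powerSeriesF)
      = rescale (-I) powerSeriesF - 1 := by
  have hF := congrArg (rescale (-I)) X_mul_powerSeriesF
  rw [map_mul, map_sub, map_one, rescale_X, map_neg] at hF
  rw [powerSeriesG, smul_eq_C_mul]
  linear_combination hF - rescale_I_bernoulliPowerSeries_mul_powerSeriesF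
    + (X * rescale (-I) powerSeriesF) * C_I_eq_two_mul

theorem coeff_powerSeriesG (n : ℕ) :
    coeff n powerSeriesG
      = coeff n (1 : ℂ⟦X⟧) - (if n = 1 then I / 2 else 0) - I ^ n * bernoulli n / n ! := by
  rw [powerSeriesG, map_sub, map_sub, coeff_C_mul, coeff_X, coeff_rescale,
    bernoulliPowerSeries, coeff_mk, eq_ratCast]
  push_cast
  split_ifs <;> ring

theorem coeff_powerSeriesG_zero : coeff 0 powerSeriesG = 0 := by
  simp [coeff_powerSeriesG]

theorem coeff_powerSeriesG_of_odd {n : ℕ} (hn : Odd n) : coeff n powerSeriesG = 0 := by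
  rcases eq_or_ne n 1 with rfl | hn1
  · rw [coeff_powerSeriesG, coeff_one, if_neg one_ne_zero, if_pos rfl, bernoulli_one]
    push_cast
    ring
  · rw [coeff_powerSeriesG, coeff_one, if_neg hn.pos.ne', if_neg hn1,
      bernoulli_eq_bernoulli'_of_ne_one hn1, bernoulli'_eq_zero_of_odd hn (by grind)]
    simp

theorem coeff_powerSeriesG_two_mul {n : ℕ} (hn : n ≠ 0) :
    coeff (2 * n) powerSeriesG = (-1) ^ (n + 1) * bernoulli (2 * n) / (2 * n)! := by
  rw [coeff_powerSeriesG, coeff_one, if_neg (by omega), if_neg (by omega), pow_mul, I_sq]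
  ring

theorem Finset.sum_range_two_mul_add_one_eq_sum_Icc {M : Type*} [AddCommMonoid M] {g : ℕ → M}
    (h₀ : g 0 = 0) (hodd : ∀ n, Odd n → g n = 0) (k : ℕ) :
    ∑ m ∈ range (2 * k + 1), g m = ∑ n ∈ Icc 1 k, g (2 * n) := by
  induction k with
  | zero => simp [h₀]
  | succ k ih =>
    rw [sum_Icc_succ_top (by omega), ← ih, show 2 * (k + 1) + 1 = 2 * k + 1 + 1 + 1 by ring,
      sum_range_succ, sum_range_succ, hodd _ (odd_two_mul_add_one k), add_zero, mul_add_one]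

theorem aevalOfPowEqZero_powerSeriesG {A : Type*} [Ring A] [Algebra ℂ A] {a : A} {k : ℕ}
    (ha : a ^ k = 0) :
    aevalOfPowEqZero ha powerSeriesG = ∑ n ∈ Finset.Icc 1 k,
      ((-1 : ℂ) ^ (n + 1) * ((bernoulli (2 * n) : ℚ) : ℂ) / ((2 * n)! : ℂ)) • a ^ (2 * n) := by
  rw [aevalOfPowEqZero_apply ha (show k ≤ 2 * k + 1 by omega),
    Finset.sum_range_two_mul_add_one_eq_sum_Icc (by rw [coeff_powerSeriesG_zero, zero_smul])
      fun n hn => by rw [coeff_powerSeriesG_of_odd hn, zero_smul]]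
  refine Finset.sum_congr rfl fun n hn => ?_
  rw [coeff_powerSeriesG_two_mul (by grind)]

theorem obstruction_identity {V : Type*} [AddCommGroup V] [Module ℂ V]
    (ψ : ℂ⟦X⟧ →ₐ[ℂ] Module.End ℂ V) {K w L : V}
    (hL : L = ψ (rescale (-I) (exp ℂ)) K + ψ (rescale (-I) powerSeriesF) w) :
    L - K - w = ψ powerSeriesG (L - K) - (I / 2) • ψ X (L + K) := by
  have hK := congrArg (fun f => ψ f K) powerSeriesG_mul_rescale_exp_sub_one
  have hw := congrArg (fun f => ψ f w) powerSeriesG_mul_rescale_powerSeriesF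
  simp only [map_sub, map_mul, map_smul, map_add, map_one, LinearMap.sub_apply,
    LinearMap.add_apply, LinearMap.smul_apply, Module.End.mul_apply, Module.End.one_apply] at hK hw
  subst hL
  simp only [map_add, map_sub, smul_add]
  linear_combination (norm := module) -hK - hw

/-- Operator form of Corollary 3.4 for a nilpotent map `N` (all series reduce to
finite sums): if `L = exp(−iN)(K) + F(−iN)(w)`, then
`L − K − w = G(N)(L − K) − (i/2) N(L + K)` with
`G(N) = Σ_{n≥1} (−1)^{n+1} (B_{2n}/(2n)!) N^{2n}`. -/
theorem stmt_9 (V : Type*) [AddCommGroup V] [Module ℂ V]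
    (N : V →ₗ[ℂ] V) (k : ℕ) (hN : N ^ k = 0) (K w L : V)
    (hL : L = (∑ n ∈ Finset.range k, ((-Complex.I) ^ n / (n ! : ℂ)) • ((N ^ n) K))
        + ∑ n ∈ Finset.range k, ((-Complex.I) ^ n / ((n + 1)! : ℂ)) • ((N ^ n) w)) :
    L - K - w =
      (∑ n ∈ Finset.Icc 1 k,
          ((-1 : ℂ) ^ (n + 1) * ((bernoulli (2 * n) : ℚ) : ℂ) / ((2 * n)! : ℂ)) •
            ((N ^ (2 * n)) (L - K)))
        - (Complex.I / 2) • (N (L + K)) := by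
  have hψ (f : ℂ⟦X⟧) (v : V) :
      aevalOfPowEqZero hN f v = ∑ n ∈ Finset.range k, coeff n f • (N ^ n) v := by
    simp only [aevalOfPowEqZero_apply hN le_rfl, LinearMap.sum_apply, LinearMap.smul_apply]
  have hL' : L = aevalOfPowEqZero hN (rescale (-I) (exp ℂ)) K
      + aevalOfPowEqZero hN (rescale (-I) powerSeriesF) w := by
    simp [hL, hψ, coeff_rescale, powerSeriesF, div_eq_mul_inv]
  rw [obstruction_identity _ hL', aevalOfPowEqZero_powerSeriesG, aevalOfPowEqZero_X,
    LinearMap.sum_apply]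
  simp only [LinearMap.smul_apply]
end

section
/- Let E be a complex Banach space, M : E → E a continuous linear map, and K, w ∈ E. Define ℓ : ℝ → E by ℓ(t) := exp(−itM)(K) + Σ_{n≥0} ((−i)ⁿ t^{n+1}/(n+1)!) Mⁿ(w). Then ℓ is differentiable with ℓ′(t) = w − i M(ℓ(t)) for all t ∈ ℝ, and it satisfies the boundary values ℓ(0) = K and ℓ(1) = exp(−iM)(K) + F(−iM)(w). (The computational core of Proposition 3.1: the interpolating interaction ℓ(t) = exp(−itO_U)(K) + F(−itO_U)(t ∂U) solves the differential equation ℓ̇(t) = ∂U − iO_U(ℓ(t)) with ℓ(0) = K and ℓ(1) = L.) -/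
open scoped Nat

/-!
Put `A = -i M`. Carrying `w` along as a constant second coordinate turns the affine equation
`ℓ' = A ℓ + w` into the linear equation `v' = B v` on `E × E`, where `B (x, y) = (A x + y, 0)`.
Since `Bⁿ⁺¹ (x, y) = (Aⁿ⁺¹ x + Aⁿ y, 0)`, the first coordinate of `exp (t B) (K, w)` is `ℓ t`,
and the differential equation is the first coordinate of `d/dt exp (t B) = B exp (t B)`.
-/

lemma HasDerivAt.comp_ofReal_of_normedSpace {F : Type*} [NormedAddCommGroup F]
    [NormedSpace ℂ F] {f : ℂ → F} {f' : F} {t : ℝ} (hf : HasDerivAt f f' t) :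
    HasDerivAt (fun s : ℝ => f s) f' t := by
  simpa [Function.comp_def] using
    (hf.hasFDerivAt.restrictScalars ℝ).comp_hasDerivAt t Complex.ofRealCLM.hasDerivAt

section AffineFlow

open NormedSpace ContinuousLinearMap

variable {𝕂 E : Type*} [RCLike 𝕂] [NormedAddCommGroup E] [NormedSpace 𝕂 E]

def affineGenerator (A : E →L[𝕂] E) : E × E →L[𝕂] E × E :=
  (A.comp (fst 𝕂 E E) + snd 𝕂 E E).prod 0

@[simp]
lemma affineGenerator_apply (A : E →L[𝕂] E) (v : E × E) :
    affineGenerator A v = (A v.1 + v.2, 0) := rfl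

lemma affineGenerator_pow_succ_apply (A : E →L[𝕂] E) (n : ℕ) (x y : E) :
    (affineGenerator A ^ (n + 1)) (x, y) = ((A ^ (n + 1)) x + (A ^ n) y, 0) := by
  induction n with
  | zero => simp
  | succ n ih =>
    rw [pow_succ', mul_apply_eq_comp, ih, affineGenerator_apply, pow_succ' A (n + 1),
      pow_succ' A n]
    simp only [mul_apply_eq_comp, map_add, add_zero]

/-- The series is `t F(tA) w`. -/
noncomputable def affineFlow (A : E →L[𝕂] E) (w : E) (t : 𝕂) (x : E) : E :=
  exp (t • A) x + ∑' n : ℕ, (t ^ (n + 1) / (n + 1)! : 𝕂) • (A ^ n) w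

@[simp]
lemma affineFlow_zero (A : E →L[𝕂] E) (w x : E) : affineFlow A w 0 x = x := by
  simp [affineFlow]

variable [CompleteSpace E]

lemma exp_smul_affineGenerator_apply (A : E →L[𝕂] E) (t : 𝕂) (x w : E) :
    exp (t • affineGenerator A) (x, w) = (affineFlow A w t x, w) := by
  have hB := (exp_series_hasSum_exp' (𝕂 := 𝕂) (t • affineGenerator A)).mapL (apply 𝕂 _ (x, w))
  have hA := (exp_series_hasSum_exp' (𝕂 := 𝕂) (t • A)).mapL (apply 𝕂 _ x)
  simp only [apply_apply, smul_apply, smul_pow] at hA hB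
  refine Prod.ext ?_ ?_
  · -- The two exponential series differ termwise by the series in `affineFlow`, which is
    -- therefore summable, with the difference of the two exponentials as its sum.
    have hd := (hasSum_nat_add_iff' 1).mpr ((hB.mapL (fst 𝕂 E E)).sub hA)
    simp only [affineGenerator_pow_succ_apply, coe_fst', Prod.smul_fst, smul_add,
      add_sub_cancel_left, Finset.range_one, Finset.sum_singleton, pow_zero,
      one_apply_eq_self, sub_self, sub_zero, smul_smul, mul_comm _ (t ^ _),
      ← div_eq_mul_inv] at hd
    exact (add_sub_cancel _ _).symm.trans (congrArg _ hd.tsum_eq.symm)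
  · have hd := (hasSum_nat_add_iff' 1).mpr (hB.mapL (snd 𝕂 E E))
    simp only [affineGenerator_pow_succ_apply, coe_snd', Prod.smul_snd, smul_zero,
      Finset.range_one, Finset.sum_singleton, pow_zero, one_apply_eq_self, one_smul,
      Nat.factorial_zero, Nat.cast_one, inv_one] at hd
    exact sub_eq_zero.mp (hd.unique hasSum_zero)

lemma hasDerivAt_affineFlow (A : E →L[𝕂] E) (w x : E) (t : 𝕂) :
    HasDerivAt (fun s => affineFlow A w s x) (A (affineFlow A w t x) + w) t := by
  let evalFst : (E × E →L[𝕂] E × E) →L[𝕂] E := (fst 𝕂 E E).comp (apply 𝕂 _ (x, w))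
  have h := evalFst.hasFDerivAt.comp_hasDerivAt t
    (hasDerivAt_exp_smul_const' (affineGenerator A) t)
  simpa [evalFst, Function.comp_def, mul_apply_eq_comp, exp_smul_affineGenerator_apply] using h

end AffineFlow

/-- The computational core of Proposition 3.1: the interpolation
`ℓ(t) = exp(−itM)(K) + F(−itM)(tw)` solves `ℓ̇(t) = w − iM(ℓ(t))` with
boundary values `ℓ(0) = K` and `ℓ(1) = exp(−iM)(K) + F(−iM)(w)`. -/
theorem stmt_10 (E : Type*) [NormedAddCommGroup E] [NormedSpace ℂ E] [CompleteSpace E]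
    (M : E →L[ℂ] E) (K w : E) (ℓ : ℝ → E)
    (hℓ : ∀ t : ℝ, ℓ t = (NormedSpace.exp (((-Complex.I) * (t : ℂ)) • M)) K
        + ∑' n : ℕ, ((-Complex.I) ^ n * (t : ℂ) ^ (n + 1) / ((n + 1)! : ℂ)) • ((M ^ n) w)) :
    (∀ t : ℝ, HasDerivAt ℓ (w - Complex.I • (M (ℓ t))) t)
    ∧ ℓ 0 = K
    ∧ ℓ 1 = (NormedSpace.exp ((-Complex.I) • M)) K
        + ∑' n : ℕ, ((-Complex.I) ^ n / ((n + 1)! : ℂ)) • ((M ^ n) w) := by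
  have hflow : ℓ = fun t : ℝ => affineFlow ((-Complex.I) • M) w t K := by
    funext t
    rw [hℓ, affineFlow, mul_comm, mul_smul]
    congr 2 with n
    rw [smul_pow, smul_apply, smul_smul]
    ring_nf
  refine ⟨fun t => ?_, by simp [hflow], by rw [hℓ 1]; norm_num⟩
  rw [hflow]
  convert (hasDerivAt_affineFlow ((-Complex.I) • M) w K t).comp_ofReal_of_normedSpace using 1
  simp only [neg_smul, neg_apply, smul_apply, sub_eq_neg_add]
end
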